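/- Dynamic-programming policy evaluation for entropic-risk MDPs: Fix λ ≠ 0 and a stochastic Markov policy ψ. Define value functions backward by V^ψ_{T+1}(s) = 0, Q^ψ_t(s,a) = r(s,a) + (1/λ)·log Σ_{s'} P(s'|s,a)·exp(λ·V^ψ_{t+1}(s')), and V^ψ_t(s) = (1/λ)·log Σ_a ψ_t(a|s)·exp(λ·Q^ψ_t(s,a)). Then the entropic-risk performance satisfies J^λ(ψ) = (1/λ)·log Σ_s ζ₁(s)·exp(λ·V^ψ_1(s)). -/

import Mathlib

open Finset

/-- A finite-horizon MDP. -/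
structure FinMDP (S A : Type) [Fintype S] [Fintype A] where
  P : S → A → S → ℝ
  P_nonneg : ∀ s a s', 0 ≤ P s a s'
  P_sum : ∀ s a, ∑ s', P s a s' = 1
  r : S → A → ℝ
  init : S → ℝ
  init_nonneg : ∀ s, 0 ≤ init s
  init_sum : ∑ s, init s = 1
  T : ℕ
  T_pos : 1 ≤ T

variable {S A : Type} [Fintype S] [Fintype A] [Nonempty S] [Nonempty A]

/-- A stochastic Markov policy: a pmf on actions at each (0-indexed) time and state. -/
def IsMPolicy {S A : Type} [Fintype A] (ψ : ℕ → S → A → ℝ) : Prop :=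
  ∀ t s, (∀ a, 0 ≤ ψ t s a) ∧ ∑ a, ψ t s a = 1

/-- Probability of a trajectory ((s_t, a_t))_{t<T} under the policy ψ. -/
noncomputable def mdpTrajProb (M : FinMDP S A) (ψ : ℕ → S → A → ℝ)
    (ω : Fin M.T → S × A) : ℝ :=
  M.init (ω ⟨0, M.T_pos⟩).1 *
  (∏ t : Fin M.T, ψ t.val (ω t).1 (ω t).2) *
  (∏ t : Fin M.T,
    if h : t.val + 1 < M.T then M.P (ω t).1 (ω t).2 (ω ⟨t.val + 1, h⟩).1 else 1)

/-- Entropic-risk performance J^λ(ψ) = (1/λ)·log E^ψ[exp(λ·Σ_t r(S_t,A_t))]. -/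
noncomputable def mdpJent (M : FinMDP S A) (ψ : ℕ → S → A → ℝ) (lam : ℝ) : ℝ :=
  (1/lam) * Real.log (∑ ω : Fin M.T → S × A,
    mdpTrajProb M ψ ω * Real.exp (lam * ∑ t : Fin M.T, M.r (ω t).1 (ω t).2))

/-- Backward policy-evaluation value function: `Vpol m` is V^ψ at the (0-indexed)
time `T − m`, so `Vpol 0 = V^ψ_{T+1} ≡ 0` and `Vpol T = V^ψ_1`.  It unfolds to
V^ψ_t(s) = (1/λ)·log Σ_a ψ_t(a|s)·exp(λ·Q^ψ_t(s,a)) with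
Q^ψ_t(s,a) = r(s,a) + (1/λ)·log Σ_{s'} P(s'|s,a)·exp(λ·V^ψ_{t+1}(s')). -/
noncomputable def Vpol (M : FinMDP S A) (ψ : ℕ → S → A → ℝ) (lam : ℝ) :
    ℕ → S → ℝ
  | 0 => fun _ => 0
  | (m+1) => fun s =>
      (1/lam) * Real.log (∑ a, ψ (M.T - (m+1)) s a *
        Real.exp (lam * (M.r s a +
          (1/lam) * Real.log (∑ s', M.P s a s' * Real.exp (lam * Vpol M ψ lam m s')))))

/-! Exponentiating the recursion for `Vpol` removes the logarithms: since every sum inside a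
logarithm is a positive combination with pmf weights, `exp (λ V)` obeys a linear backward
recursion. Summing the trajectory weights of `exp (λ Σ r)` one step at a time from the start
produces exactly that linear recursion. -/

theorem Fin.prod_dite_add_one_lt {X M : Type*} [CommMonoid M] (n : ℕ) (K : X → X → M)
    (v : Fin (n + 1) → X) :
    ∏ i : Fin (n + 1), (if h : i.val + 1 < n + 1 then K (v i) (v ⟨i.val + 1, h⟩) else 1)
      = ∏ i : Fin n, K (v i.castSucc) (v i.succ) := by
  rw [Fin.prod_univ_castSucc, dif_neg (by simp), mul_one]
  refine Finset.prod_congr rfl fun i _ => ?_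
  rw [dif_pos (by simp)]
  rfl

theorem Finset.sum_mul_pos_of_nonneg_of_sum_pos {ι : Type*} [Fintype ι] {p g : ι → ℝ}
    (hp : ∀ i, 0 ≤ p i) (hp_sum : 0 < ∑ i, p i) (hg : ∀ i, 0 < g i) :
    0 < ∑ i, p i * g i := by
  obtain ⟨i, -, hi⟩ := Finset.exists_lt_of_sum_lt (s := univ) (f := fun _ => (0 : ℝ))
    (by simpa only [Finset.sum_const_zero] using hp_sum)
  exact Finset.sum_pos' (fun j _ => mul_nonneg (hp j) (hg j).le)
    ⟨i, Finset.mem_univ i, mul_pos hi (hg i)⟩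

theorem Real.exp_mul_one_div_mul_log {lam x : ℝ} (hlam : lam ≠ 0) (hx : 0 < x) :
    Real.exp (lam * (1 / lam * Real.log x)) = x := by
  rw [← mul_assoc, mul_one_div_cancel hlam, one_mul, Real.exp_log hx]

section ChainWeight

variable {X R : Type*} [Fintype X] [CommSemiring R] (f : ℕ → X → R) (K : X → X → R)

noncomputable def chainWeight : ℕ → ℕ → X → R
  | 0, t, x => f t x
  | n + 1, t, x => f t x * ∑ y, K x y * chainWeight n (t + 1) y

theorem sum_chain_eq_sum_chainWeight (n t₀ : ℕ) (w : X → R) :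
    ∑ ω : Fin (n + 1) → X,
        w (ω 0) * (∏ i, f (t₀ + i.val) (ω i)) * ∏ i : Fin n, K (ω i.castSucc) (ω i.succ)
      = ∑ x, w x * chainWeight f K n t₀ x := by
  induction n generalizing t₀ w with
  | zero =>
    rw [← (Equiv.funUnique (Fin 1) X).symm.sum_comp]
    simp [chainWeight]
  | succ n ih =>
    rw [← (Fin.consEquiv fun _ => X).sum_comp, Fintype.sum_prod_type]
    refine Finset.sum_congr rfl fun x _ => ?_
    rw [chainWeight, ← ih (t₀ + 1) (K x), Finset.mul_sum, Finset.mul_sum]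
    refine Finset.sum_congr rfl fun ω _ => ?_
    simp only [Fin.consEquiv_apply]
    rw [Fin.prod_univ_succ (n := n), Fin.prod_univ_succ (n := n + 1)]
    simp only [Fin.cons_zero, Fin.cons_succ, Fin.castSucc_zero, ← Fin.succ_castSucc,
      Fin.val_zero, Fin.val_succ, add_zero, add_assoc, add_comm 1]
    ring

theorem sum_chain_dite_eq_sum_chainWeight (n : ℕ) (hn : 0 < n) (t₀ : ℕ) (w : X → R) :
    ∑ ω : Fin n → X, w (ω ⟨0, hn⟩) * (∏ i, f (t₀ + i.val) (ω i)) *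
        ∏ i : Fin n, (if h : i.val + 1 < n then K (ω i) (ω ⟨i.val + 1, h⟩) else 1)
      = ∑ x, w x * chainWeight f K (n - 1) t₀ x := by
  obtain ⟨n, rfl⟩ := Nat.exists_eq_add_one_of_ne_zero hn.ne'
  simp only [Fin.prod_dite_add_one_lt]
  exact sum_chain_eq_sum_chainWeight f K n t₀ w

end ChainWeight

theorem exp_mul_Vpol_succ {S A : Type} [Fintype S] [Fintype A] (M : FinMDP S A)
    {ψ : ℕ → S → A → ℝ} (hψ : IsMPolicy ψ) {lam : ℝ} (hlam : lam ≠ 0) (m : ℕ) (s : S) :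
    Real.exp (lam * Vpol M ψ lam (m + 1) s)
      = ∑ a, ψ (M.T - (m + 1)) s a * Real.exp (lam * M.r s a) *
          ∑ s', M.P s a s' * Real.exp (lam * Vpol M ψ lam m s') := by
  rw [Vpol, Real.exp_mul_one_div_mul_log hlam (Finset.sum_mul_pos_of_nonneg_of_sum_pos
    (hψ _ s).1 ((hψ _ s).2 ▸ one_pos) fun _ => Real.exp_pos _)]
  refine Finset.sum_congr rfl fun a _ => ?_
  rw [mul_add, Real.exp_add, Real.exp_mul_one_div_mul_log hlam
    (Finset.sum_mul_pos_of_nonneg_of_sum_pos (M.P_nonneg s a) (M.P_sum s a ▸ one_pos)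
      fun _ => Real.exp_pos _), mul_assoc]

theorem sum_chainWeight_eq_exp_mul_Vpol {S A : Type} [Fintype S] [Fintype A] (M : FinMDP S A)
    {ψ : ℕ → S → A → ℝ} (hψ : IsMPolicy ψ) {lam : ℝ} (hlam : lam ≠ 0) (k t : ℕ)
    (ht : t + (k + 1) = M.T) (s : S) :
    ∑ a, chainWeight (fun t x => ψ t x.1 x.2 * Real.exp (lam * M.r x.1 x.2))
        (fun x y => M.P x.1 x.2 y.1) k t (s, a)
      = Real.exp (lam * Vpol M ψ lam (k + 1) s) := by
  induction k generalizing t s with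
  | zero =>
    rw [exp_mul_Vpol_succ M hψ hlam, show M.T - (0 + 1) = t by omega]
    simp [chainWeight, Vpol, M.P_sum]
  | succ k ih =>
    rw [exp_mul_Vpol_succ M hψ hlam, show M.T - (k + 1 + 1) = t by omega]
    simp only [chainWeight, Fintype.sum_prod_type, ← Finset.mul_sum, ← ih (t + 1) (by omega)]

theorem mdpJent_eq_log_sum_chainWeight {S A : Type} [Fintype S] [Fintype A] (M : FinMDP S A)
    (ψ : ℕ → S → A → ℝ) (lam : ℝ) :
    mdpJent M ψ lam = 1 / lam * Real.log (∑ x : S × A, M.init x.1 *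
      chainWeight (fun t x => ψ t x.1 x.2 * Real.exp (lam * M.r x.1 x.2))
        (fun x y => M.P x.1 x.2 y.1) (M.T - 1) 0 x) := by
  rw [mdpJent, ← sum_chain_dite_eq_sum_chainWeight _ _ M.T M.T_pos]
  congr 2
  refine Finset.sum_congr rfl fun ω _ => ?_
  rw [mdpTrajProb, Finset.mul_sum, Real.exp_sum, Finset.prod_mul_distrib]
  simp only [zero_add]
  ring

/-- **Dynamic-programming policy evaluation for entropic-risk MDPs**:
J^λ(ψ) = (1/λ)·log Σ_s ζ₁(s)·exp(λ·V^ψ_1(s)). -/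
theorem entropic_mdp_policy_evaluation
    (M : FinMDP S A) (ψ : ℕ → S → A → ℝ) (hψ : IsMPolicy ψ)
    (lam : ℝ) (hlam : lam ≠ 0) :
    mdpJent M ψ lam
      = (1/lam) * Real.log (∑ s, M.init s * Real.exp (lam * Vpol M ψ lam M.T s)) := by
  rw [mdpJent_eq_log_sum_chainWeight, Fintype.sum_prod_type]
  congr 2
  refine Finset.sum_congr rfl fun s _ => ?_
  have hT : 0 + (M.T - 1 + 1) = M.T := by have := M.T_pos; omega
  rw [← Finset.mul_sum (s := univ) (a := M.init s),
    sum_chainWeight_eq_exp_mul_Vpol M hψ hlam (M.T - 1) 0 hT, Nat.sub_add_cancel M.T_pos]
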